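/- Let λ₁, …, λₙ be positive integers and define d_A(x,y) = Σᵢ |xᵢ − yᵢ|^{1/λᵢ} on ℝⁿ. Then: (i) d_A is a metric on ℝⁿ, invariant under all translations; (ii) the bijection α(x) = (2^{λ₁}x₁, …, 2^{λₙ}xₙ) satisfies d_A(αx, αy) = 2·d_A(x,y) for all x,y; (iii) with Γ = ℤⁿ acting by translations and K = [0,1]ⁿ, one has ℝⁿ = ⋃_{γ∈Γ}(γ + K), distinct translates γ + K have disjoint interiors, and α(K) = [0,2^{λ₁}] × ⋯ × [0,2^{λₙ}] is the union of the finitely many translates γ + K with γ ∈ ∏ᵢ {0,1,…,2^{λᵢ}−1}; moreover α Γ α⁻¹ ⊆ Γ. Hence (ℝⁿ, d_A) possesses a stacked tiling. -/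
import Mathlib

open scoped BigOperators

/-- The metric `d_A(x,y) = Σᵢ |xᵢ − yᵢ|^{1/λᵢ}` on `ℝⁿ`. -/
noncomputable def dA (n : ℕ) (lam : Fin n → ℕ) (x y : Fin n → ℝ) : ℝ :=
  ∑ i, |x i - y i| ^ ((1 : ℝ) / (lam i : ℝ))

/-- The dilation `α(x)ᵢ = 2^{λᵢ}·xᵢ`. -/
def alphaA (n : ℕ) (lam : Fin n → ℕ) (x : Fin n → ℝ) : Fin n → ℝ :=
  fun i => (2 : ℝ) ^ lam i * x i

/-- Translation of `ℝⁿ` by an integer vector `γ`. -/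
def transl (n : ℕ) (γ : Fin n → ℤ) (x : Fin n → ℝ) : Fin n → ℝ :=
  fun i => (γ i : ℝ) + x i

lemma rpow_sub_add (a b : ℝ) (ha : 0 ≤ a) (hb : 0 ≤ b) {p : ℝ} (hp : 0 ≤ p) (hp1 : p ≤ 1) :
    (a + b) ^ p ≤ a ^ p + b ^ p := by
  lift a to NNReal using ha
  lift b to NNReal using hb
  exact_mod_cast NNReal.rpow_add_le_add_rpow a b hp hp1

lemma transl_mem (n : ℕ) (γ : Fin n → ℤ) (x : Fin n → ℝ) :
    x ∈ transl n γ '' Set.Icc (0 : Fin n → ℝ) 1 ↔ ∀ i, (γ i : ℝ) ≤ x i ∧ x i ≤ γ i + 1 := by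
  constructor
  · rintro ⟨y, hy, rfl⟩ i
    have h1 := hy.1 i
    have h2 := hy.2 i
    simp only [Pi.zero_apply, Pi.one_apply] at h1 h2
    simp only [transl]
    constructor <;> linarith
  · intro h
    refine ⟨fun i => x i - γ i, ⟨fun i => ?_, fun i => ?_⟩, ?_⟩
    · simp only [Pi.zero_apply]; linarith [(h i).1]
    · simp only [Pi.one_apply]; linarith [(h i).2]
    · funext i; simp [transl]

lemma transl_image_eq (n : ℕ) (γ : Fin n → ℤ) :
    transl n γ '' Set.Icc (0 : Fin n → ℝ) 1 =
      Set.Icc (fun i => (γ i : ℝ)) (fun i => (γ i : ℝ) + 1) := by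
  ext x
  rw [transl_mem]
  simp [Set.mem_Icc, Pi.le_def, forall_and]

lemma interior_transl (n : ℕ) (γ : Fin n → ℤ) :
    interior (transl n γ '' Set.Icc (0 : Fin n → ℝ) 1) =
      Set.pi Set.univ (fun i => Set.Ioo (γ i : ℝ) ((γ i : ℝ) + 1)) := by
  rw [transl_image_eq, ← Set.pi_univ_Icc, interior_pi_set Set.finite_univ]
  simp [interior_Icc]

lemma alphaA_mem (n : ℕ) (lam : Fin n → ℕ) (x : Fin n → ℝ) :
    x ∈ alphaA n lam '' Set.Icc (0 : Fin n → ℝ) 1 ↔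
      ∀ i, 0 ≤ x i ∧ x i ≤ (2 : ℝ) ^ lam i := by
  have hpow : ∀ i, (0 : ℝ) < 2 ^ lam i := fun i => by positivity
  constructor
  · rintro ⟨y, hy, rfl⟩ i
    have h1 := hy.1 i
    have h2 := hy.2 i
    simp only [Pi.zero_apply, Pi.one_apply] at h1 h2
    simp only [alphaA]
    constructor
    · exact mul_nonneg (hpow i).le h1
    · calc (2:ℝ) ^ lam i * y i ≤ 2 ^ lam i * 1 :=
        mul_le_mul_of_nonneg_left h2 (hpow i).le
      _ = 2 ^ lam i := mul_one _
  · intro h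
    refine ⟨fun i => x i / 2 ^ lam i, ⟨fun i => ?_, fun i => ?_⟩, ?_⟩
    · simp only [Pi.zero_apply]
      exact div_nonneg (h i).1 (hpow i).le
    · simp only [Pi.one_apply]
      rw [div_le_one (hpow i)]; exact (h i).2
    · funext i
      simp only [alphaA]
      field_simp

lemma pow_rpow_inv (lam : ℕ) (hlam : 0 < lam) :
    ((2 : ℝ) ^ lam) ^ ((1 : ℝ) / (lam : ℝ)) = 2 := by
  rw [← Real.rpow_natCast 2 lam, ← Real.rpow_mul (by norm_num), mul_one_div, div_self,
    Real.rpow_one]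
  exact_mod_cast hlam.ne'

/-- Let `λ₁,…,λₙ` be positive integers. Then (i) `d_A` is a translation-invariant metric on
`ℝⁿ`; (ii) `α(x) = (2^{λ₁}x₁,…,2^{λₙ}xₙ)` is a homothety of factor `2` for `d_A`;
(iii) with `Γ = ℤⁿ` and `K = [0,1]ⁿ`, the translates `γ + K` cover `ℝⁿ` and have pairwise
disjoint interiors, `α(K) = [0,2^{λ₁}]×⋯×[0,2^{λₙ}]` is the union of the finitely many
translates `γ + K` with `0 ≤ γᵢ < 2^{λᵢ}`, and `αΓα⁻¹ ⊆ Γ`. Hence `(ℝⁿ, d_A)` possesses a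
stacked tiling. -/
theorem stmt_18 (n : ℕ) (lam : Fin n → ℕ) (hlam : ∀ i, 0 < lam i) :
    (∀ x y : Fin n → ℝ, (dA n lam x y = 0 ↔ x = y)) ∧
    (∀ x y : Fin n → ℝ, dA n lam x y = dA n lam y x) ∧
    (∀ x y z : Fin n → ℝ, dA n lam x z ≤ dA n lam x y + dA n lam y z) ∧
    (∀ x y v : Fin n → ℝ, dA n lam (x + v) (y + v) = dA n lam x y) ∧
    (∀ x y : Fin n → ℝ, dA n lam (alphaA n lam x) (alphaA n lam y) = 2 * dA n lam x y) ∧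
    ((⋃ γ : Fin n → ℤ, transl n γ '' Set.Icc (0 : Fin n → ℝ) 1) = Set.univ) ∧
    (∀ γ γ' : Fin n → ℤ, γ ≠ γ' →
      interior (transl n γ '' Set.Icc (0 : Fin n → ℝ) 1) ∩
        interior (transl n γ' '' Set.Icc (0 : Fin n → ℝ) 1) = ∅) ∧
    (alphaA n lam '' Set.Icc (0 : Fin n → ℝ) 1 =
      Set.Icc (0 : Fin n → ℝ) (fun i => (2 : ℝ) ^ lam i)) ∧
    (alphaA n lam '' Set.Icc (0 : Fin n → ℝ) 1 =
      ⋃ γ ∈ {γ : Fin n → ℤ | ∀ i, 0 ≤ γ i ∧ γ i < 2 ^ lam i},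
        transl n γ '' Set.Icc (0 : Fin n → ℝ) 1) ∧
    (∀ γ : Fin n → ℤ, ∃ γ' : Fin n → ℤ, ∀ x : Fin n → ℝ,
      alphaA n lam (transl n γ x) = transl n γ' (alphaA n lam x)) := by
  have hp0 : ∀ i, (0 : ℝ) < (1 : ℝ) / (lam i : ℝ) := fun i => by
    have : (0 : ℝ) < (lam i : ℝ) := by exact_mod_cast hlam i
    positivity
  have hp1 : ∀ i, (1 : ℝ) / (lam i : ℝ) ≤ 1 := fun i => by
    have h1 : (1 : ℝ) ≤ (lam i : ℝ) := by exact_mod_cast hlam i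
    rw [div_le_one (by linarith)]; exact h1
  refine ⟨?_, ?_, ?_, ?_, ?_, ?_, ?_, ?_, ?_, ?_⟩
  · -- (i) positivity
    intro x y
    constructor
    · intro h
      funext i
      have hnn : ∀ j ∈ Finset.univ, (0:ℝ) ≤ |x j - y j| ^ ((1 : ℝ) / (lam j : ℝ)) :=
        fun j _ => Real.rpow_nonneg (abs_nonneg _) _
      have := (Finset.sum_eq_zero_iff_of_nonneg hnn).1 h i (Finset.mem_univ i)
      have h0 : |x i - y i| = 0 :=
        (Real.rpow_eq_zero (abs_nonneg _) (hp0 i).ne').1 this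
      have := abs_eq_zero.1 h0
      linarith [sub_eq_zero.1 this]
    · rintro rfl
      unfold dA
      apply Finset.sum_eq_zero
      intro i _
      rw [sub_self, abs_zero, Real.zero_rpow (hp0 i).ne']
  · -- symmetry
    intro x y
    unfold dA
    congr 1
    funext i
    rw [abs_sub_comm]
  · -- triangle
    intro x y z
    unfold dA
    rw [← Finset.sum_add_distrib]
    apply Finset.sum_le_sum
    intro i _
    calc |x i - z i| ^ ((1 : ℝ) / (lam i : ℝ))
        ≤ (|x i - y i| + |y i - z i|) ^ ((1 : ℝ) / (lam i : ℝ)) := by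
          apply Real.rpow_le_rpow (abs_nonneg _) _ (hp0 i).le
          exact abs_sub_le _ _ _
      _ ≤ |x i - y i| ^ ((1 : ℝ) / (lam i : ℝ)) + |y i - z i| ^ ((1 : ℝ) / (lam i : ℝ)) :=
          rpow_sub_add _ _ (abs_nonneg _) (abs_nonneg _) (hp0 i).le (hp1 i)
  · -- translation invariance
    intro x y v
    unfold dA
    congr 1
    funext i
    simp [add_sub_add_comm]
  · -- homothety
    intro x y
    unfold dA
    rw [Finset.mul_sum]
    apply Finset.sum_congr rfl
    intro i _
    have hpow : (0:ℝ) < 2 ^ lam i := by positivity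
    simp only [alphaA]
    rw [← mul_sub, abs_mul, abs_of_pos hpow,
      Real.mul_rpow hpow.le (abs_nonneg _), pow_rpow_inv (lam i) (hlam i)]
  · -- cover
    rw [Set.eq_univ_iff_forall]
    intro x
    rw [Set.mem_iUnion]
    refine ⟨fun i => ⌊x i⌋, (transl_mem _ _ _).2 fun i => ⟨Int.floor_le _, ?_⟩⟩
    exact (Int.lt_floor_add_one (x i)).le
  · -- disjoint interiors
    intro γ γ' hne
    rw [Set.eq_empty_iff_forall_notMem]
    intro x ⟨hx, hx'⟩
    rw [interior_transl] at hx hx'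
    apply hne
    funext i
    have h1 := hx i (Set.mem_univ i)
    have h2 := hx' i (Set.mem_univ i)
    have e1 : ⌊x i⌋ = γ i := Int.floor_eq_iff.2 ⟨h1.1.le, by exact_mod_cast h1.2⟩
    have e2 : ⌊x i⌋ = γ' i := Int.floor_eq_iff.2 ⟨h2.1.le, by exact_mod_cast h2.2⟩
    rw [← e1, ← e2]
  · -- image of K under alpha
    ext x
    rw [alphaA_mem]
    simp [Set.mem_Icc, Pi.le_def, forall_and]
  · -- alpha K as finite union
    ext x
    rw [alphaA_mem]
    simp only [Set.mem_iUnion, Set.mem_setOf_eq]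
    constructor
    · intro h
      refine ⟨fun i => min ⌊x i⌋ (2 ^ lam i - 1), fun i => ⟨?_, ?_⟩,
        (transl_mem _ _ _).2 fun i => ⟨?_, ?_⟩⟩
      · refine le_min (Int.floor_nonneg.2 (h i).1) ?_
        have hpos : (0:ℤ) < 2 ^ lam i := by positivity
        omega
      · show min ⌊x i⌋ (2 ^ lam i - 1) < 2 ^ lam i
        have hm := min_le_right ⌊x i⌋ (2 ^ lam i - 1)
        have hpos : (0:ℤ) < 2 ^ lam i := by positivity
        omega
      · have h1 : ((min ⌊x i⌋ (2 ^ lam i - 1) : ℤ) : ℝ) ≤ ((⌊x i⌋ : ℤ) : ℝ) := by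
          exact_mod_cast min_le_left ⌊x i⌋ (2 ^ lam i - 1)
        linarith [Int.floor_le (x i)]
      · rcases le_or_gt ⌊x i⌋ (2 ^ lam i - 1) with hc | hc
        · rw [min_eq_left hc]
          exact (Int.lt_floor_add_one (x i)).le
        · rw [min_eq_right hc.le]
          have he : (((2:ℤ) ^ lam i - 1 : ℤ) : ℝ) + 1 = (2:ℝ) ^ lam i := by
            push_cast; ring
          rw [he]
          exact (h i).2
    · rintro ⟨γ, hγ, hx⟩ i
      have h := (transl_mem _ _ _).1 hx i
      have h1 : (0:ℤ) ≤ γ i := (hγ i).1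
      have h2 : γ i + 1 ≤ 2 ^ lam i := (hγ i).2
      constructor
      · have : (0:ℝ) ≤ (γ i : ℝ) := by exact_mod_cast h1
        linarith [h.1]
      · have : ((γ i : ℝ) + 1) ≤ (2:ℝ) ^ lam i := by exact_mod_cast h2
        linarith [h.2]
  · -- conjugation
    intro γ
    refine ⟨fun i => 2 ^ lam i * γ i, fun x => ?_⟩
    funext i
    simp only [alphaA, transl]
    push_cast
    ring
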